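/- Suppose W̲(θ, q*) < G* for some θ ∈ Θ and θ^m > θ̲ (so θ̲ < θ^m < θ*). Then every solution q^OPT of (ROPT) satisfies q^OPT(θ) = q^BM(θ) for all θ ∈ (θ̲, θ^m). -/

import Mathlib

open MeasureTheory Set

noncomputable section

/-- The base environment: type space `Θ = [θl, θu]`, capacity `qbar`, lowest inverse
demand `Pl = P̲` (decreasing and continuous on `[0, qbar]` with `Pl 0 > θu`) and the
induced lowest demand `Dl = D̲`, with `Dl θl < qbar`. -/
structure Env where
  θl : ℝ
  θu : ℝ
  qbar : ℝ
  Pl : ℝ → ℝ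
  Dl : ℝ → ℝ
  θl_pos : 0 < θl
  θlu : θl < θu
  qbar_pos : 0 < qbar
  Pl_anti : StrictAntiOn Pl (Icc 0 qbar)
  Pl_cont : ContinuousOn Pl (Icc 0 qbar)
  Pl0 : θu < Pl 0
  Dl_inv : ∀ p, Pl qbar ≤ p → p ≤ Pl 0 → Dl p ∈ Icc (0:ℝ) qbar ∧ Pl (Dl p) = p
  Dl_high : ∀ p, Pl 0 < p → Dl p = 0
  Dl_low : ∀ p, p < Pl qbar → Dl p = qbar
  Dl_lt : Dl θl < qbar

namespace Env

/-- The type space `Θ = [θl, θu]`. -/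
def Θ (E : Env) : Set ℝ := Icc E.θl E.θu

/-- The lowest gross value function `V̲ (x) = ∫_0^x P̲`. -/
def Vl (E : Env) (x : ℝ) : ℝ := ∫ s in (0:ℝ)..x, E.Pl s

/-- `q_ℓ = D̲(θu)`: the efficient quantity at the lowest demand and highest cost. -/
def ql (E : Env) : ℝ := E.Dl E.θu

/-- `G* = V̲(q_ℓ) − θu · q_ℓ`: the maximal attainable guarantee. -/
def Gstar (E : Env) : ℝ := E.Vl E.ql - E.θu * E.ql

/-- A feasible quantity schedule: weakly decreasing on `Θ`, valued in `[0, qbar]`. -/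
def IsSchedule (E : Env) (q : ℝ → ℝ) : Prop :=
  AntitoneOn q E.Θ ∧ ∀ θ ∈ E.Θ, q θ ∈ Icc (0:ℝ) E.qbar

/-- `W̲(θ, q) = V̲(q(θ)) − θ q(θ) − ∫_θ^{θu} q`: ex-post welfare at the lowest demand
with zero rent for the highest type. -/
def Wl (E : Env) (q : ℝ → ℝ) (θ : ℝ) : ℝ :=
  E.Vl (q θ) - θ * q θ - ∫ y in θ..E.θu, q y

/-- An IC and IR (direct) quantity mechanism `(q, u)`. -/
def IsMech (E : Env) (q u : ℝ → ℝ) : Prop :=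
  E.IsSchedule q ∧ 0 ≤ u E.θu ∧
    ∀ θ ∈ E.Θ, u θ = u E.θu + ∫ y in θ..E.θu, q y

/-- The set `𝒱` of admissible gross value functions: integrals of decreasing continuous
inverse demands dominating `P̲` pointwise. -/
def IsValue (E : Env) (V : ℝ → ℝ) : Prop :=
  ∃ P : ℝ → ℝ, StrictAntiOn P (Icc 0 E.qbar) ∧ ContinuousOn P (Icc 0 E.qbar) ∧
    (∀ s ∈ Icc (0:ℝ) E.qbar, E.Pl s ≤ P s) ∧ ∀ x, V x = ∫ s in (0:ℝ)..x, P s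

/-- A Borel probability measure supported in `Θ` (the measure of a cdf `F ∈ 𝒻`). -/
def IsTech (E : Env) (μ : Measure ℝ) : Prop :=
  IsProbabilityMeasure μ ∧ μ (E.Θᶜ) = 0

/-- Ex-ante welfare `W(M; V, F)` of the mechanism `(q, u)` under value `V` and
cost technology `μ`. -/
def W (E : Env) (q u V : ℝ → ℝ) (μ : Measure ℝ) : ℝ :=
  ∫ θ, (V (q θ) - θ * q θ - u θ) ∂μ

/-- The welfare guarantee `G(M) = inf_{V ∈ 𝒱, F ∈ 𝒻} W(M; V, F)`. -/
def G (E : Env) (q u : ℝ → ℝ) : ℝ :=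
  sInf {w : ℝ | ∃ (V : ℝ → ℝ) (μ : Measure ℝ),
    E.IsValue V ∧ E.IsTech μ ∧ w = E.W q u V μ}

/-- The short list: IC and IR mechanisms with the highest guarantee. -/
def ShortList (E : Env) (q u : ℝ → ℝ) : Prop :=
  E.IsMech q u ∧ ∀ q' u' : ℝ → ℝ, E.IsMech q' u' → E.G q' u' ≤ E.G q u

/-- Feasibility in the program (ROPT): a schedule satisfying all robustness
constraints `W̲(θ, q) ≥ G*`. -/
def FeasibleROPT (E : Env) (q : ℝ → ℝ) : Prop :=
  E.IsSchedule q ∧ ∀ θ ∈ E.Θ, E.Gstar ≤ E.Wl q θ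

end Env

/-- A demand `D ∈ 𝒟`, bundled with the inverse demand `P` that induces it:
`P` decreasing and continuous on `[0, qbar]`, `P ≥ P̲` pointwise, `P 0 > θu`. -/
structure Demand (E : Env) where
  P : ℝ → ℝ
  D : ℝ → ℝ
  P_anti : StrictAntiOn P (Icc 0 E.qbar)
  P_cont : ContinuousOn P (Icc 0 E.qbar)
  P_ge : ∀ s ∈ Icc (0:ℝ) E.qbar, E.Pl s ≤ P s
  P0 : E.θu < P 0
  D_inv : ∀ p, P E.qbar ≤ p → p ≤ P 0 → D p ∈ Icc (0:ℝ) E.qbar ∧ P (D p) = p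
  D_high : ∀ p, P 0 < p → D p = 0
  D_low : ∀ p, p < P E.qbar → D p = E.qbar
  D_lt : D E.θl < E.qbar

namespace Demand

/-- The gross value function `V_D(x) = ∫_0^x P` induced by a demand `D ∈ 𝒟`. -/
def V {E : Env} (D : Demand E) (x : ℝ) : ℝ := ∫ s in (0:ℝ)..x, D.P s

end Demand

namespace Env

/-- The lowest demand `D̲` as an element of `𝒟`. -/
def DlDemand (E : Env) : Demand E where
  P := E.Pl
  D := E.Dl
  P_anti := E.Pl_anti
  P_cont := E.Pl_cont
  P_ge := fun _ _ => le_refl _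
  P0 := E.Pl0
  D_inv := E.Dl_inv
  D_high := E.Dl_high
  D_low := E.Dl_low
  D_lt := E.Dl_lt

/-- A price regulation `(p, t)`: nonnegative prices and transfers. -/
def IsPriceReg (E : Env) (p : ℝ → ℝ) (t : ℝ → Demand E → ℝ) : Prop :=
  (∀ θ ∈ E.Θ, 0 ≤ p θ) ∧ ∀ θ ∈ E.Θ, ∀ D : Demand E, 0 ≤ t θ D

/-- The rent `ũ(θ, D) = t(θ, D) − θ · D(p(θ))` of the monopolist. -/
def rent (E : Env) (p : ℝ → ℝ) (t : ℝ → Demand E → ℝ) (θ : ℝ) (D : Demand E) : ℝ :=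
  t θ D - θ * D.D (p θ)

/-- Ex-post incentive compatibility of a price regulation. -/
def EPIC (E : Env) (p : ℝ → ℝ) (t : ℝ → Demand E → ℝ) : Prop :=
  ∀ θ ∈ E.Θ, ∀ θ' ∈ E.Θ, ∀ D : Demand E,
    t θ' D - θ * D.D (p θ') ≤ E.rent p t θ D

/-- Ex-post individual rationality of a price regulation. -/
def EPIR (E : Env) (p : ℝ → ℝ) (t : ℝ → Demand E → ℝ) : Prop :=
  ∀ θ ∈ E.Θ, ∀ D : Demand E, 0 ≤ E.rent p t θ D

/-- Ex-post welfare `w̃(θ; D) = V_D(D(p(θ))) − θ·D(p(θ)) − ũ(θ, D)`. -/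
def wt (E : Env) (p : ℝ → ℝ) (t : ℝ → Demand E → ℝ) (θ : ℝ) (D : Demand E) : ℝ :=
  D.V (D.D (p θ)) - θ * D.D (p θ) - E.rent p t θ D

/-- Ex-ante welfare `W̃((p,t); D, F)` of a price regulation. -/
def Wt (E : Env) (p : ℝ → ℝ) (t : ℝ → Demand E → ℝ) (D : Demand E) (μ : Measure ℝ) : ℝ :=
  ∫ θ, E.wt p t θ D ∂μ

/-- The welfare guarantee `G̃((p,t)) = inf_{D ∈ 𝒟, F ∈ 𝒻} W̃((p,t); D, F)`. -/
def Gt (E : Env) (p : ℝ → ℝ) (t : ℝ → Demand E → ℝ) : ℝ :=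
  sInf {w : ℝ | ∃ (D : Demand E) (μ : Measure ℝ), E.IsTech μ ∧ w = E.Wt p t D μ}

/-- An EPIC and EPIR price regulation. -/
def IsAdmissiblePR (E : Env) (p : ℝ → ℝ) (t : ℝ → Demand E → ℝ) : Prop :=
  E.IsPriceReg p t ∧ E.EPIC p t ∧ E.EPIR p t

/-- The price short list: EPIC and EPIR price regulations with the highest guarantee. -/
def PriceShortList (E : Env) (p : ℝ → ℝ) (t : ℝ → Demand E → ℝ) : Prop :=
  E.IsAdmissiblePR p t ∧
    ∀ (p' : ℝ → ℝ) (t' : ℝ → Demand E → ℝ), E.IsAdmissiblePR p' t' → E.Gt p' t' ≤ E.Gt p t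

end Env

/-- The conjectured model: a regular cdf `F*` with density `f*` on `Θ`, and a
conjectured inverse demand `P*` (with induced demand `D*`) dominating `P̲`. -/
structure Model (E : Env) where
  Fstar : ℝ → ℝ
  fstar : ℝ → ℝ
  Pstar : ℝ → ℝ
  Dstar : ℝ → ℝ
  fstar_pos : ∀ θ ∈ E.Θ, 0 < fstar θ
  Fstar_ac : ∀ θ ∈ E.Θ, Fstar θ = ∫ y in E.θl..θ, fstar y
  Fstar_l : Fstar E.θl = 0
  Fstar_u : Fstar E.θu = 1
  zstar_cont : ContinuousOn (fun θ => θ + Fstar θ / fstar θ) E.Θ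
  zstar_mono : StrictMonoOn (fun θ => θ + Fstar θ / fstar θ) E.Θ
  Pstar_anti : StrictAntiOn Pstar (Icc 0 E.qbar)
  Pstar_cont : ContinuousOn Pstar (Icc 0 E.qbar)
  Pstar_ge : ∀ s ∈ Icc (0:ℝ) E.qbar, E.Pl s ≤ Pstar s
  Pstar0 : E.θu < Pstar 0
  Dstar_inv : ∀ p, Pstar E.qbar ≤ p → p ≤ Pstar 0 →
    Dstar p ∈ Icc (0:ℝ) E.qbar ∧ Pstar (Dstar p) = p
  Dstar_high : ∀ p, Pstar 0 < p → Dstar p = 0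
  Dstar_low : ∀ p, p < Pstar E.qbar → Dstar p = E.qbar
  Dstar_lt : Dstar E.θl < E.qbar

namespace Model

variable {E : Env} (Mo : Model E)

/-- The virtual cost `z*(θ) = θ + F*(θ)/f*(θ)`. -/
def zstar (θ : ℝ) : ℝ := θ + Mo.Fstar θ / Mo.fstar θ

/-- The conjectured gross value function `V*(x) = ∫_0^x P*`. -/
def Vstar (x : ℝ) : ℝ := ∫ s in (0:ℝ)..x, Mo.Pstar s

/-- The Baron–Myerson schedule `q^BM(θ) = D*(z*(θ))`. -/
def qBM (θ : ℝ) : ℝ := Mo.Dstar (Mo.zstar θ)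

/-- The Baron–Myerson-with-quantity-floor schedule `q*(θ) = max{q^BM(θ), q_ℓ}`. -/
def qstar (θ : ℝ) : ℝ := max (Mo.qBM θ) E.ql

/-- The objective of (ROPT): expected virtual surplus under the conjectured model. -/
def J (q : ℝ → ℝ) : ℝ :=
  ∫ θ in E.θl..E.θu, (Mo.Vstar (q θ) - Mo.zstar θ * q θ) * Mo.fstar θ

/-- `q` solves the program (ROPT). -/
def SolvesROPT (q : ℝ → ℝ) : Prop :=
  E.FeasibleROPT q ∧ ∀ q' : ℝ → ℝ, E.FeasibleROPT q' → Mo.J q' ≤ Mo.J q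

/-- `θ*`: the unique solution of `q^BM(θ*) = q_ℓ` in `Θ` when `q^BM(θu) < q_ℓ`;
otherwise `θ* = θu`. -/
def IsThetaStar (θs : ℝ) : Prop :=
  (Mo.qBM E.θu < E.ql ∧ θs ∈ E.Θ ∧ Mo.qBM θs = E.ql) ∨
    (E.ql ≤ Mo.qBM E.θu ∧ θs = E.θu)

/-- `θ^m`: the largest minimizer of `W̲(·, q*)` over `Θ`. -/
def IsThetaM (θm : ℝ) : Prop :=
  θm ∈ E.Θ ∧ (∀ θ' ∈ E.Θ, E.Wl Mo.qstar θm ≤ E.Wl Mo.qstar θ') ∧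
    ∀ θ ∈ E.Θ, (∀ θ' ∈ E.Θ, E.Wl Mo.qstar θ ≤ E.Wl Mo.qstar θ') → θ ≤ θm

/-- The conjectured demand `D*` as an element of `𝒟`. -/
def DstarDemand : Demand E where
  P := Mo.Pstar
  D := Mo.Dstar
  P_anti := Mo.Pstar_anti
  P_cont := Mo.Pstar_cont
  P_ge := Mo.Pstar_ge
  P0 := Mo.Pstar0
  D_inv := Mo.Dstar_inv
  D_high := Mo.Dstar_high
  D_low := Mo.Dstar_low
  D_lt := Mo.Dstar_lt

/-- Expected welfare `W((q,u); V*, F*)` of a quantity mechanism under the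
conjectured model. -/
def WStar (q u : ℝ → ℝ) : ℝ :=
  ∫ θ in E.θl..E.θu, (Mo.Vstar (q θ) - θ * q θ - u θ) * Mo.fstar θ

/-- Expected welfare `W̃((p,t); D*, F*)` of a price regulation under the
conjectured model. -/
def WtStar (p : ℝ → ℝ) (t : ℝ → Demand E → ℝ) : ℝ :=
  ∫ θ in E.θl..E.θu, E.wt p t θ Mo.DstarDemand * Mo.fstar θ

/-- A robustly optimal price regulation: in the price short list, and maximizing
expected welfare under the conjectured model over the price short list. -/
def RobustlyOptimalPR (p : ℝ → ℝ) (t : ℝ → Demand E → ℝ) : Prop :=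
  E.PriceShortList p t ∧
    ∀ (p' : ℝ → ℝ) (t' : ℝ → Demand E → ℝ), E.PriceShortList p' t' →
      Mo.WtStar p' t' ≤ Mo.WtStar p t

/-- A Baron–Myerson-with-price-cap regulation. -/
def IsBMPriceCap (p : ℝ → ℝ) (t : ℝ → Demand E → ℝ) : Prop :=
  E.IsAdmissiblePR p t ∧
  (∀ θ ∈ E.Θ, p θ = min (Mo.zstar θ) E.θu) ∧
  (∀ θ ∈ E.Θ, ∀ D : Demand E,
    E.rent p t θ D = E.rent p t E.θu D + ∫ y in θ..E.θu, D.D (p y)) ∧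
  (∀ D : Demand E, D ≠ E.DlDemand → D ≠ Mo.DstarDemand →
    0 ≤ E.rent p t E.θu D ∧
      E.rent p t E.θu D ≤ D.V (D.D E.θu) - E.θu * D.D E.θu - E.Gstar) ∧
  E.rent p t E.θu E.DlDemand = 0 ∧ E.rent p t E.θu Mo.DstarDemand = 0

end Model

/-! Write `c = q^BM(θm)`. Since `W̲(·, q*)` drops below `G*`, the floor `q_ℓ` is not binding at
`θm`, so `q_ℓ ≤ c`, and the first-order condition at the largest minimiser `θm` of `W̲(·, q*)`
reads `P̲(c) = θm`. Given a solution `q` of (ROPT), the schedule equal to `q^BM` up to `θm` and to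
`min q c` beyond is again feasible: above `θm` the cap raises `V̲(q) − θ q` (as `P̲(c) ≤ θ`) and
lowers the rent integral, and below `θm` the constraints are inherited from the minimality of
`θm`. Its virtual surplus dominates that of `q` pointwise (`q^BM` maximises it, and above `θm`
`P*(c) = z*(θm) ≤ z*(θ)`), so optimality forces `q = q^BM` a.e. on `(θl, θm)`. Finally `P* ∘ q`
is monotone and a.e. equal to the continuous `z*` there, hence equal to it everywhere. -/

open Filter

section RealAnalysis

variable {P : ℝ → ℝ} {a b x y : ℝ}

theorem AntitoneOn.intervalIntegral_le_mul (hP : AntitoneOn P (uIcc x y)) :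
    ∫ s in x..y, P s ≤ P x * (y - x) := by
  rcases le_total x y with hxy | hyx
  · have h := intervalIntegral.integral_mono_on hxy (hP.intervalIntegrable (μ := volume))
      (intervalIntegrable_const (c := P x))
      fun s hs => hP left_mem_uIcc (Icc_subset_uIcc hs) hs.1
    simpa [mul_comm] using h
  · have h := intervalIntegral.integral_mono_on hyx (intervalIntegrable_const (c := P x))
      (hP.intervalIntegrable (μ := volume)).symm
      fun s hs => hP (Icc_subset_uIcc' hs) left_mem_uIcc hs.2
    rw [intervalIntegral.integral_symm]
    simp only [intervalIntegral.integral_const, smul_eq_mul] at h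
    linarith

theorem StrictAntiOn.intervalIntegral_lt_mul (hP : StrictAntiOn P (uIcc x y))
    (hc : ContinuousOn P (uIcc x y)) (hxy : x ≠ y) :
    ∫ s in x..y, P s < P x * (y - x) := by
  rcases hxy.lt_or_gt with hxy | hyx
  · rw [uIcc_of_le hxy.le] at hP hc
    have h := intervalIntegral.integral_lt_integral_of_continuousOn_of_le_of_exists_lt hxy hc
      continuousOn_const
      (fun s hs => hP.antitoneOn (left_mem_Icc.2 hxy.le) (Ioc_subset_Icc_self hs) hs.1.le)
      ⟨y, right_mem_Icc.2 hxy.le, hP (left_mem_Icc.2 hxy.le) (right_mem_Icc.2 hxy.le) hxy⟩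
    simpa [mul_comm] using h
  · rw [uIcc_of_ge hyx.le] at hP hc
    have h := intervalIntegral.integral_lt_integral_of_continuousOn_of_le_of_exists_lt hyx
      continuousOn_const hc
      (fun s hs => hP.antitoneOn (Ioc_subset_Icc_self hs) (right_mem_Icc.2 hyx.le) hs.2)
      ⟨y, left_mem_Icc.2 hyx.le, hP (left_mem_Icc.2 hyx.le) (right_mem_Icc.2 hyx.le) hyx⟩
    rw [intervalIntegral.integral_symm]
    simp only [intervalIntegral.integral_const, smul_eq_mul] at h
    linarith

theorem AntitoneOn.integral_le_integral_add_mul (hP : AntitoneOn P (Icc a b))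
    (hx : x ∈ Icc a b) (hy : y ∈ Icc a b) :
    ∫ s in a..y, P s ≤ (∫ s in a..x, P s) + P x * (y - x) := by
  have ha : a ∈ Icc a b := left_mem_Icc.2 (hx.1.trans hx.2)
  have hint : ∀ {u v}, u ∈ Icc a b → v ∈ Icc a b → IntervalIntegrable P volume u v :=
    fun hu hv => (hP.mono (uIcc_subset_Icc hu hv)).intervalIntegrable
  have h := (hP.mono (uIcc_subset_Icc hx hy)).intervalIntegral_le_mul
  rw [← intervalIntegral.integral_interval_sub_left (hint ha hy) (hint ha hx)] at h
  linarith

theorem StrictAntiOn.integral_lt_integral_add_mul (hP : StrictAntiOn P (Icc a b))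
    (hc : ContinuousOn P (Icc a b)) (hx : x ∈ Icc a b) (hy : y ∈ Icc a b) (hxy : x ≠ y) :
    ∫ s in a..y, P s < (∫ s in a..x, P s) + P x * (y - x) := by
  have ha : a ∈ Icc a b := left_mem_Icc.2 (hx.1.trans hx.2)
  have hint : ∀ {u v}, u ∈ Icc a b → v ∈ Icc a b → IntervalIntegrable P volume u v :=
    fun hu hv => (hc.mono (uIcc_subset_Icc hu hv)).intervalIntegrable
  have h := (hP.mono (uIcc_subset_Icc hx hy)).intervalIntegral_lt_mul
    (hc.mono (uIcc_subset_Icc hx hy)) hxy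
  rw [← intervalIntegral.integral_interval_sub_left (hint ha hy) (hint ha hx)] at h
  linarith

theorem ae_restrict_eq_of_le_of_intervalIntegral_le {f g : ℝ → ℝ} (hab : a ≤ b)
    (hf : IntervalIntegrable f volume a b) (hg : IntervalIntegrable g volume a b)
    (hfg : ∀ x ∈ Ioc a b, f x ≤ g x) (hint : ∫ x in a..b, g x ≤ ∫ x in a..b, f x) :
    f =ᵐ[volume.restrict (Ioc a b)] g := by
  rw [intervalIntegral.integral_of_le hab, intervalIntegral.integral_of_le hab] at hint
  have hle : f ≤ᵐ[volume.restrict (Ioc a b)] g :=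
    (ae_restrict_iff' measurableSet_Ioc).2 (Eventually.of_forall hfg)
  exact (integral_eq_iff_of_ae_le hf.1 hg.1 hle).1
    (le_antisymm (integral_mono_ae hf.1 hg.1 hle) hint)

theorem MonotoneOn.eqOn_of_ae_eq {f g : ℝ → ℝ} (hf : MonotoneOn f (Ioo a b))
    (hg : ContinuousOn g (Ioo a b)) (hfg : f =ᵐ[volume.restrict (Ioo a b)] g) :
    EqOn f g (Ioo a b) := by
  set D := {x | x ∈ Ioo a b → f x = g x}
  have hdense : Dense D := Measure.dense_of_ae ((ae_restrict_iff' measurableSet_Ioo).1 hfg)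
  have hclosure : ∀ u v, u < v → u ∈ closure (Ioo u v ∩ D) ∧ v ∈ closure (Ioo u v ∩ D) :=
    fun u v huv => by
      have h := closure_mono (hdense.open_subset_closure_inter (isOpen_Ioo (a := u) (b := v)))
      rw [closure_closure, closure_Ioo huv.ne] at h
      exact ⟨h (left_mem_Icc.2 huv.le), h (right_mem_Icc.2 huv.le)⟩
  intro x hx
  have hxa : Ioo a x ⊆ Ioo a b := Ioo_subset_Ioo_right hx.2.le
  have hxb : Ioo x b ⊆ Ioo a b := Ioo_subset_Ioo_left hx.1.le
  apply le_antisymm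
  · refine ContinuousWithinAt.closure_le (f := fun _ => f x) (hclosure x b hx.2).1
      continuousWithinAt_const ((hg x hx).mono fun y hy => hxb hy.1) fun y ⟨hy, hfy⟩ => ?_
    rw [← hfy (hxb hy)]
    exact hf hx (hxb hy) hy.1.le
  · refine ContinuousWithinAt.closure_le (g := fun _ => f x) (hclosure a x hx.1).2
      ((hg x hx).mono fun y hy => hxa hy.1) continuousWithinAt_const fun y ⟨hy, hfy⟩ => ?_
    rw [← hfy (hxa hy)]
    exact hf (hxa hy) hx hy.2.le

theorem ContinuousOn.aestronglyMeasurable_comp {α : Type*} [MeasurableSpace α] {μ : Measure α}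
    {g : ℝ → ℝ} {s : Set ℝ} (hg : ContinuousOn g s) (hs : MeasurableSet s) {f : α → ℝ}
    (hf : AEMeasurable f μ) (hfs : ∀ᵐ x ∂μ, f x ∈ s) :
    AEStronglyMeasurable (fun x => g (f x)) μ := by
  classical
  have hm : Measurable (s.piecewise g 0) :=
    hg.measurable_piecewise continuousOn_const hs
  refine (hm.comp_aemeasurable hf).aestronglyMeasurable.congr ?_
  filter_upwards [hfs] with x hx
  simp [Function.comp, Set.piecewise_eq_of_mem _ _ _ hx]

end RealAnalysis

namespace Demand

variable {E : Env} (D : Demand E) {p x c : ℝ}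

theorem D_mem (p : ℝ) : D.D p ∈ Icc 0 E.qbar := by
  rcases lt_or_ge p (D.P E.qbar) with hlow | hlow
  · rw [D.D_low p hlow]; exact right_mem_Icc.2 E.qbar_pos.le
  rcases le_or_gt p (D.P 0) with hhigh | hhigh
  · exact (D.D_inv p hlow hhigh).1
  · rw [D.D_high p hhigh]; exact left_mem_Icc.2 E.qbar_pos.le

theorem P_D_le (h : D.D p < E.qbar) : D.P (D.D p) ≤ p := by
  rcases lt_or_ge p (D.P E.qbar) with hlow | hlow
  · exact absurd (D.D_low p hlow) h.ne
  rcases le_or_gt p (D.P 0) with hhigh | hhigh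
  · exact (D.D_inv p hlow hhigh).2.le
  · rw [D.D_high p hhigh]; exact hhigh.le

theorem le_P_D (h : 0 < D.D p) : p ≤ D.P (D.D p) := by
  rcases lt_or_ge p (D.P E.qbar) with hlow | hlow
  · rw [D.D_low p hlow]; exact hlow.le
  rcases le_or_gt p (D.P 0) with hhigh | hhigh
  · exact (D.D_inv p hlow hhigh).2.ge
  · exact absurd (D.D_high p hhigh) h.ne'

theorem P_D_of_mem_Ioo (h : D.D p ∈ Ioo 0 E.qbar) : D.P (D.D p) = p :=
  le_antisymm (D.P_D_le h.2) (D.le_P_D h.1)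

theorem D_antitone : Antitone D.D := by
  intro p₁ p₂ hp
  by_contra! hlt
  have h₁ := D.P_D_le (hlt.trans_le (D.D_mem p₂).2)
  have h₂ := D.le_P_D ((D.D_mem p₁).1.trans_lt hlt)
  have h₃ := D.P_anti (D.D_mem p₁) (D.D_mem p₂) hlt
  linarith

theorem D_pos (hp : p < D.P 0) : 0 < D.D p := by
  rcases lt_or_ge p (D.P E.qbar) with hlow | hlow
  · rw [D.D_low p hlow]; exact E.qbar_pos
  obtain ⟨hmem, hP⟩ := D.D_inv p hlow hp.le
  refine hmem.1.lt_of_ne fun h0 => hp.ne ?_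
  rw [← hP, ← h0]

theorem D_lt_qbar (hp : E.θl ≤ p) : D.D p < E.qbar :=
  (D.D_antitone hp).trans_lt D.D_lt

theorem V_sub_mul_lt (hx : x ∈ Icc 0 E.qbar) (hne : x ≠ D.D p) :
    D.V x - p * x < D.V (D.D p) - p * D.D p := by
  have h := D.P_anti.integral_lt_integral_add_mul D.P_cont (D.D_mem p) hx hne.symm
  have hfoc : (D.P (D.D p) - p) * (x - D.D p) ≤ 0 := by
    rcases (D.D_mem p).1.eq_or_lt with h0 | h0
    · exact mul_nonpos_of_nonpos_of_nonneg
        (sub_nonpos.2 (D.P_D_le (h0 ▸ E.qbar_pos))) (by linarith [hx.1])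
    rcases (D.D_mem p).2.eq_or_lt with h1 | h1
    · exact mul_nonpos_of_nonneg_of_nonpos (sub_nonneg.2 (D.le_P_D h0)) (by linarith [hx.2])
    · rw [D.P_D_of_mem_Ioo ⟨h0, h1⟩, sub_self, zero_mul]
  change D.V x < D.V (D.D p) + D.P (D.D p) * (x - D.D p) at h
  linarith

theorem eq_D_of_V_sub_mul_le (hx : x ∈ Icc 0 E.qbar)
    (h : D.V (D.D p) - p * D.D p ≤ D.V x - p * x) : x = D.D p := by
  by_contra hne
  exact (D.V_sub_mul_lt hx hne).not_ge h

theorem V_sub_mul_le (hx : x ∈ Icc 0 E.qbar) : D.V x - p * x ≤ D.V (D.D p) - p * D.D p := by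
  rcases eq_or_ne x (D.D p) with rfl | hne
  · exact le_rfl
  · exact (D.V_sub_mul_lt hx hne).le

theorem V_sub_mul_le_min (hc : c ∈ Icc 0 E.qbar) (hx : x ∈ Icc 0 E.qbar) (hp : D.P c ≤ p) :
    D.V x - p * x ≤ D.V (min x c) - p * min x c := by
  rcases le_total x c with hxc | hcx
  · rw [min_eq_left hxc]
  · rw [min_eq_right hcx]
    have h : D.V x ≤ D.V c + D.P c * (x - c) :=
      D.P_anti.antitoneOn.integral_le_integral_add_mul hc hx
    linarith [mul_le_mul_of_nonneg_right hp (sub_nonneg.2 hcx)]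

end Demand

namespace Env

variable (E : Env) {q : ℝ → ℝ} {s t : ℝ}

theorem θl_mem_Θ : E.θl ∈ E.Θ := left_mem_Icc.2 E.θlu.le

theorem θu_mem_Θ : E.θu ∈ E.Θ := right_mem_Icc.2 E.θlu.le

theorem ql_mem : E.ql ∈ Icc 0 E.qbar := E.DlDemand.D_mem _

theorem ql_pos : 0 < E.ql := E.DlDemand.D_pos E.Pl0

theorem intervalIntegrable_of_antitoneOn (hq : AntitoneOn q E.Θ) (hs : s ∈ E.Θ) (ht : t ∈ E.Θ) :
    IntervalIntegrable q volume s t :=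
  (hq.mono (uIcc_subset_Icc hs ht)).intervalIntegrable

variable {E}

theorem Wl_sub_Wl (hq : AntitoneOn q E.Θ) (hs : s ∈ E.Θ) (ht : t ∈ E.Θ) :
    E.Wl q t - E.Wl q s = E.Vl (q t) - t * q t - (E.Vl (q s) - s * q s) + ∫ y in s..t, q y := by
  rw [Wl, Wl, ← intervalIntegral.integral_add_adjacent_intervals
    (E.intervalIntegrable_of_antitoneOn hq ht hs)
    (E.intervalIntegrable_of_antitoneOn hq hs E.θu_mem_Θ),
    intervalIntegral.integral_symm t s]
  ring

theorem Wl_sub_Wl_le (hq : E.IsSchedule q) (hs : s ∈ E.Θ) (ht : t ∈ E.Θ) :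
    E.Wl q t - E.Wl q s ≤ (E.Pl (q s) - t) * (q t - q s) := by
  have hV : E.Vl (q t) ≤ E.Vl (q s) + E.Pl (q s) * (q t - q s) :=
    E.Pl_anti.antitoneOn.integral_le_integral_add_mul (hq.2 s hs) (hq.2 t ht)
  have hI : ∫ y in s..t, q y ≤ q s * (t - s) :=
    (hq.1.mono (uIcc_subset_Icc hs ht)).intervalIntegral_le_mul
  rw [Wl_sub_Wl hq.1 hs ht]
  linarith

end Env

namespace Model

variable {E : Env} (Mo : Model E) {q : ℝ → ℝ} {θ θ' θm : ℝ}

theorem zstar_θl : Mo.zstar E.θl = E.θl := by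
  simp [zstar, Mo.Fstar_l]

theorem θl_le_zstar (hθ : θ ∈ E.Θ) : E.θl ≤ Mo.zstar θ :=
  Mo.zstar_θl ▸ Mo.zstar_mono.monotoneOn E.θl_mem_Θ hθ hθ.1

theorem qBM_mem (θ : ℝ) : Mo.qBM θ ∈ Icc 0 E.qbar := Mo.DstarDemand.D_mem _

theorem qBM_antitoneOn : AntitoneOn Mo.qBM E.Θ := fun _ ha _ hb hab =>
  Mo.DstarDemand.D_antitone (Mo.zstar_mono.monotoneOn ha hb hab)

theorem qBM_lt_qbar (hθ : θ ∈ E.Θ) : Mo.qBM θ < E.qbar :=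
  Mo.DstarDemand.D_lt_qbar (Mo.θl_le_zstar hθ)

theorem Pstar_qBM (hθ : θ ∈ E.Θ) (hpos : 0 < Mo.qBM θ) : Mo.Pstar (Mo.qBM θ) = Mo.zstar θ :=
  Mo.DstarDemand.P_D_of_mem_Ioo ⟨hpos, Mo.qBM_lt_qbar hθ⟩

theorem qBM_lt_qBM (hθ : θ ∈ E.Θ) (hθ' : θ' ∈ E.Θ) (hlt : θ < θ') (hpos : 0 < Mo.qBM θ') :
    Mo.qBM θ' < Mo.qBM θ := by
  refine (Mo.qBM_antitoneOn hθ hθ' hlt.le).lt_of_ne fun h => (Mo.zstar_mono hθ hθ' hlt).ne ?_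
  change Mo.zstar θ = Mo.zstar θ'
  rw [← Mo.Pstar_qBM hθ (h ▸ hpos), ← h, Mo.Pstar_qBM hθ' hpos]

theorem isSchedule_qstar : E.IsSchedule Mo.qstar :=
  ⟨fun _ ha _ hb hab => max_le_max (Mo.qBM_antitoneOn ha hb hab) le_rfl, fun θ _ =>
    ⟨E.ql_pos.le.trans (le_max_right _ _), max_le (Mo.qBM_mem θ).2 E.ql_mem.2⟩⟩

theorem qstar_eq_qBM (h : E.ql ≤ Mo.qBM θ) : Mo.qstar θ = Mo.qBM θ := max_eq_left h

theorem ql_le_qBM_of_Wl_lt (hθ : θ ∈ E.Θ) (h : E.Wl Mo.qstar θ < E.Gstar) :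
    E.ql ≤ Mo.qBM θ := by
  by_contra! hlt
  have hfloor : ∀ y ∈ uIcc θ E.θu, Mo.qstar y = E.ql := fun y hy => by
    rw [uIcc_of_le hθ.2] at hy
    exact max_eq_right ((Mo.qBM_antitoneOn hθ ⟨hθ.1.trans hy.1, hy.2⟩ hy.1).trans hlt.le)
  refine h.ne' ?_
  rw [Env.Wl, Env.Gstar, hfloor θ left_mem_uIcc, intervalIntegral.integral_congr hfloor,
    intervalIntegral.integral_const, smul_eq_mul]
  ring

theorem Pl_qBM_eq_of_isThetaM (hθm : Mo.IsThetaM θm) (hθl : E.θl < θm)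
    (hql : E.ql ≤ Mo.qBM θm) : E.Pl (Mo.qBM θm) = θm := by
  obtain ⟨hθmΘ, hmin, hmax⟩ := hθm
  set c := Mo.qBM θm
  have hc : c < E.qbar := Mo.qBM_lt_qbar hθmΘ
  have hqθm : Mo.qstar θm = c := Mo.qstar_eq_qBM hql
  have hdev : ∀ t ∈ E.Θ, E.Wl Mo.qstar t - E.Wl Mo.qstar θm ≤ (E.Pl c - t) * (Mo.qstar t - c) :=
    fun t ht => hqθm ▸ Env.Wl_sub_Wl_le Mo.isSchedule_qstar hθmΘ ht
  apply le_antisymm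
  · by_contra! hgt
    rcases hθmΘ.2.eq_or_lt with heq | hθu
    · have h := (E.Pl_anti.antitoneOn E.ql_mem ⟨E.ql_pos.le.trans hql, hc.le⟩ hql).trans
        (E.DlDemand.P_D_le (hql.trans_lt hc))
      change E.Pl c ≤ E.θu at h
      linarith
    -- a larger type `t` doing no worse than `θm` would contradict the maximality of `θm`
    obtain ⟨t, hθmt, htu, htP⟩ : ∃ t, θm < t ∧ t < E.θu ∧ t < E.Pl c := by
      obtain ⟨t, h, h'⟩ := exists_between (lt_min hθu hgt)
      exact ⟨t, h, lt_min_iff.1 h'⟩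
    have ht : t ∈ E.Θ := ⟨hθmΘ.1.trans hθmt.le, htu.le⟩
    have hq : Mo.qstar t ≤ c := hqθm ▸ Mo.isSchedule_qstar.1 hθmΘ ht hθmt.le
    have hWt : E.Wl Mo.qstar t ≤ E.Wl Mo.qstar θm := by
      linarith [hdev t ht, mul_nonpos_of_nonneg_of_nonpos (sub_nonneg.2 htP.le) (sub_nonpos.2 hq)]
    exact hθmt.not_ge (hmax t ht fun θ' hθ' => hWt.trans (hmin θ' hθ'))
  · by_contra! hlt
    obtain ⟨t, hlt_t, htθm⟩ := exists_between (max_lt hθl hlt)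
    obtain ⟨hθlt, hPt⟩ := max_lt_iff.1 hlt_t
    have ht : t ∈ E.Θ := ⟨hθlt.le, htθm.le.trans hθmΘ.2⟩
    have hq : c < Mo.qstar t := (Mo.qBM_lt_qBM ht hθmΘ htθm (E.ql_pos.trans_le hql)).trans_le
      (le_max_left _ _)
    linarith [hdev t ht, hmin t ht, mul_pos (sub_pos.2 hPt) (sub_pos.2 hq)]

def bmCap (q : ℝ → ℝ) (θm θ : ℝ) : ℝ :=
  if θ ≤ θm then Mo.qBM θ else min (q θ) (Mo.qBM θm)

theorem isSchedule_bmCap (hq : E.IsSchedule q) : E.IsSchedule (Mo.bmCap q θm) := by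
  refine ⟨fun a ha b hb hab => ?_, fun θ hθ => ?_⟩
  · unfold bmCap
    split_ifs with hb' ha' ha'
    · exact Mo.qBM_antitoneOn ha hb hab
    · exact absurd (hab.trans hb') ha'
    · exact (min_le_right _ _).trans
        (Mo.qBM_antitoneOn ha ⟨ha.1.trans ha', (not_le.1 hb').le.trans hb.2⟩ ha')
    · exact min_le_min (hq.1 ha hb hab) le_rfl
  · unfold bmCap
    split_ifs
    · exact Mo.qBM_mem θ
    · exact ⟨le_min (hq.2 θ hθ).1 (Mo.qBM_mem θm).1, (min_le_left _ _).trans (hq.2 θ hθ).2⟩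

theorem bmCap_of_le (h : θ ≤ θm) : Mo.bmCap q θm θ = Mo.qBM θ := if_pos h

theorem bmCap_of_lt (h : θm < θ) : Mo.bmCap q θm θ = min (q θ) (Mo.qBM θm) := if_neg h.not_ge

theorem Wl_le_Wl_bmCap (hq : E.IsSchedule q) (hPl : E.Pl (Mo.qBM θm) = θm) (hθ : θ ∈ E.Θ)
    (hθmθ : θm ≤ θ) : E.Wl q θ ≤ E.Wl (Mo.bmCap q θm) θ := by
  have hc := Mo.qBM_mem θm
  have hown : E.Vl (q θ) - θ * q θ ≤ E.Vl (Mo.bmCap q θm θ) - θ * Mo.bmCap q θm θ := by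
    rcases hθmθ.eq_or_lt with rfl | hlt
    · have h : E.Vl (q θm) ≤ E.Vl (Mo.qBM θm) + E.Pl (Mo.qBM θm) * (q θm - Mo.qBM θm) :=
        E.Pl_anti.antitoneOn.integral_le_integral_add_mul hc (hq.2 θm hθ)
      rw [hPl] at h
      rw [Mo.bmCap_of_le le_rfl]
      linarith
    · rw [Mo.bmCap_of_lt hlt]
      exact E.DlDemand.V_sub_mul_le_min hc (hq.2 θ hθ) (hPl.trans_le hlt.le)
  have hint : ∫ y in θ..E.θu, Mo.bmCap q θm y ≤ ∫ y in θ..E.θu, q y :=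
    intervalIntegral.integral_mono_on_of_le_Ioo hθ.2
      (E.intervalIntegrable_of_antitoneOn (Mo.isSchedule_bmCap hq).1 hθ E.θu_mem_Θ)
      (E.intervalIntegrable_of_antitoneOn hq.1 hθ E.θu_mem_Θ) fun y hy => by
        rw [Mo.bmCap_of_lt (hθmθ.trans_lt hy.1)]
        exact min_le_left _ _
  rw [Env.Wl, Env.Wl]
  linarith

theorem feasibleROPT_bmCap (hq : E.FeasibleROPT q) (hθm : θm ∈ E.Θ)
    (hmin : ∀ θ ∈ E.Θ, E.Wl Mo.qstar θm ≤ E.Wl Mo.qstar θ) (hql : E.ql ≤ Mo.qBM θm)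
    (hPl : E.Pl (Mo.qBM θm) = θm) : E.FeasibleROPT (Mo.bmCap q θm) := by
  have hsched := Mo.isSchedule_bmCap (θm := θm) hq.1
  refine ⟨hsched, fun θ hθ => ?_⟩
  rcases le_or_gt θm θ with hθmθ | hθθm
  · exact (hq.2 θ hθ).trans (Mo.Wl_le_Wl_bmCap hq.1 hPl hθ hθmθ)
  -- below `θm` the two schedules agree, so the constraint is inherited from `θm`
  have hagree : ∀ y ∈ uIcc θ θm, Mo.bmCap q θm y = Mo.qstar y := fun y hy => by
    rw [uIcc_of_le hθθm.le] at hy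
    rw [Mo.bmCap_of_le hy.2, Mo.qstar_eq_qBM (hql.trans
      (Mo.qBM_antitoneOn ⟨hθ.1.trans hy.1, hy.2.trans hθm.2⟩ hθm hy.2))]
  have hdiff := Env.Wl_sub_Wl hsched.1 hθ hθm
  rw [hagree θ left_mem_uIcc, hagree θm right_mem_uIcc, intervalIntegral.integral_congr hagree,
    ← Env.Wl_sub_Wl Mo.isSchedule_qstar.1 hθ hθm] at hdiff
  linarith [hmin θ hθ, (hq.2 θm hθm).trans (Mo.Wl_le_Wl_bmCap hq.1 hPl hθm le_rfl)]

theorem surplus_le_bmCap (hq : E.IsSchedule q) (hP : Mo.Pstar (Mo.qBM θm) = Mo.zstar θm)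
    (hθm : θm ∈ E.Θ) (hθ : θ ∈ E.Θ) :
    Mo.Vstar (q θ) - Mo.zstar θ * q θ
      ≤ Mo.Vstar (Mo.bmCap q θm θ) - Mo.zstar θ * Mo.bmCap q θm θ := by
  rcases le_or_gt θ θm with hθθm | hθmθ
  · rw [Mo.bmCap_of_le hθθm]
    exact Mo.DstarDemand.V_sub_mul_le (hq.2 θ hθ)
  · rw [Mo.bmCap_of_lt hθmθ]
    exact Mo.DstarDemand.V_sub_mul_le_min (Mo.qBM_mem θm) (hq.2 θ hθ)
      (hP.trans_le (Mo.zstar_mono.monotoneOn hθm hθ hθmθ.le))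

theorem intervalIntegrable_fstar : IntervalIntegrable Mo.fstar volume E.θl E.θu := by
  by_contra h
  have h1 := Mo.Fstar_ac E.θu E.θu_mem_Θ
  rw [intervalIntegral.integral_undef h, Mo.Fstar_u] at h1
  exact one_ne_zero h1

theorem continuousOn_Vstar : ContinuousOn Mo.Vstar (Icc 0 E.qbar) := by
  have h := intervalIntegral.continuousOn_primitive_interval (μ := volume) (a := 0) (b := E.qbar)
    (f := Mo.Pstar) (by rw [uIcc_of_le E.qbar_pos.le]; exact Mo.Pstar_cont.integrableOn_Icc)
  rwa [uIcc_of_le E.qbar_pos.le] at h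

theorem intervalIntegrable_surplus_mul_fstar (hq : E.IsSchedule q) :
    IntervalIntegrable (fun θ => (Mo.Vstar (q θ) - Mo.zstar θ * q θ) * Mo.fstar θ)
      volume E.θl E.θu := by
  have hf := Mo.intervalIntegrable_fstar
  rw [intervalIntegrable_iff_integrableOn_Ioc_of_le E.θlu.le] at hf ⊢
  have hsub : volume.restrict (Ioc E.θl E.θu) ≤ volume.restrict E.Θ :=
    Measure.restrict_mono Ioc_subset_Icc_self le_rfl
  have hΘ : ∀ᵐ θ ∂volume.restrict (Ioc E.θl E.θu), θ ∈ E.Θ :=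
    ae_restrict_of_forall_mem measurableSet_Ioc fun θ h => Ioc_subset_Icc_self h
  have hqm : AEMeasurable q (volume.restrict (Ioc E.θl E.θu)) :=
    (aemeasurable_restrict_of_antitoneOn measurableSet_Icc hq.1).mono_measure hsub
  have hzm : AEStronglyMeasurable Mo.zstar (volume.restrict (Ioc E.θl E.θu)) :=
    (Mo.zstar_cont.aestronglyMeasurable measurableSet_Icc).mono_measure hsub
  obtain ⟨C₁, hC₁⟩ := isCompact_Icc.exists_bound_of_continuousOn Mo.continuousOn_Vstar
  obtain ⟨C₂, hC₂⟩ := isCompact_Icc.exists_bound_of_continuousOn Mo.zstar_cont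
  refine hf.bdd_mul (c := C₁ + C₂ * E.qbar) ((Mo.continuousOn_Vstar.aestronglyMeasurable_comp
    measurableSet_Icc hqm (hΘ.mono fun θ h => hq.2 θ h)).sub (hzm.mul hqm.aestronglyMeasurable)) ?_
  filter_upwards [hΘ] with θ hθ
  have hqθ : ‖q θ‖ ≤ E.qbar := by
    rw [Real.norm_eq_abs, abs_le]; constructor <;> linarith [(hq.2 θ hθ).1, (hq.2 θ hθ).2]
  calc ‖Mo.Vstar (q θ) - Mo.zstar θ * q θ‖ ≤ ‖Mo.Vstar (q θ)‖ + ‖Mo.zstar θ‖ * ‖q θ‖ :=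
        (norm_sub_le _ _).trans_eq (by rw [norm_mul])
    _ ≤ C₁ + C₂ * E.qbar := add_le_add (hC₁ _ (hq.2 θ hθ))
        (mul_le_mul (hC₂ θ hθ) hqθ (norm_nonneg _) ((norm_nonneg _).trans (hC₂ θ hθ)))

theorem ae_eq_qBM_of_solvesROPT (hOPT : Mo.SolvesROPT q) (hθm : θm ∈ E.Θ)
    (hmin : ∀ θ ∈ E.Θ, E.Wl Mo.qstar θm ≤ E.Wl Mo.qstar θ) (hql : E.ql ≤ Mo.qBM θm)
    (hPl : E.Pl (Mo.qBM θm) = θm) : q =ᵐ[volume.restrict (Ioo E.θl θm)] Mo.qBM := by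
  have hP := Mo.Pstar_qBM hθm (E.ql_pos.trans_le hql)
  have hfeas := Mo.feasibleROPT_bmCap hOPT.1 hθm hmin hql hPl
  have hae := ae_restrict_eq_of_le_of_intervalIntegral_le E.θlu.le
    (Mo.intervalIntegrable_surplus_mul_fstar hOPT.1.1)
    (Mo.intervalIntegrable_surplus_mul_fstar hfeas.1)
    (fun θ hθ => mul_le_mul_of_nonneg_right (Mo.surplus_le_bmCap hOPT.1.1 hP hθm
      (Ioc_subset_Icc_self hθ)) (Mo.fstar_pos θ (Ioc_subset_Icc_self hθ)).le)
    (hOPT.2 _ hfeas)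
  have hsub : Ioo E.θl θm ⊆ Ioc E.θl E.θu := fun θ h => ⟨h.1, h.2.le.trans hθm.2⟩
  filter_upwards [ae_restrict_of_ae_restrict_of_subset hsub hae,
    ae_restrict_mem measurableSet_Ioo] with θ hθ hθI
  have hθΘ : θ ∈ E.Θ := Ioc_subset_Icc_self (hsub hθI)
  rw [Mo.bmCap_of_le hθI.2.le] at hθ
  exact Mo.DstarDemand.eq_D_of_V_sub_mul_le (hOPT.1.1.2 θ hθΘ)
    (mul_right_cancel₀ (Mo.fstar_pos θ hθΘ).ne' hθ).ge

theorem eqOn_qBM_of_ae_eq (hq : E.IsSchedule q) (hθm : θm ∈ E.Θ) (hpos : 0 < Mo.qBM θm)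
    (hae : q =ᵐ[volume.restrict (Ioo E.θl θm)] Mo.qBM) : EqOn q Mo.qBM (Ioo E.θl θm) := by
  have hΘ : Ioo E.θl θm ⊆ E.Θ := fun θ h => ⟨h.1.le, h.2.le.trans hθm.2⟩
  have hP : ∀ θ ∈ Ioo E.θl θm, Mo.Pstar (Mo.qBM θ) = Mo.zstar θ := fun θ h =>
    Mo.Pstar_qBM (hΘ h) (hpos.trans_le (Mo.qBM_antitoneOn (hΘ h) hθm h.2.le))
  have heq : EqOn (fun θ => Mo.Pstar (q θ)) Mo.zstar (Ioo E.θl θm) := by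
    refine MonotoneOn.eqOn_of_ae_eq (fun a ha b hb hab => Mo.Pstar_anti.antitoneOn
      (hq.2 b (hΘ hb)) (hq.2 a (hΘ ha)) (hq.1 (hΘ ha) (hΘ hb) hab)) (Mo.zstar_cont.mono hΘ) ?_
    filter_upwards [hae, ae_restrict_mem measurableSet_Ioo] with θ hθ hθI
    rw [hθ, hP θ hθI]
  intro θ hθ
  exact Mo.Pstar_anti.injOn (hq.2 θ (hΘ hθ)) (Mo.qBM_mem θ) ((heq hθ).trans (hP θ hθ).symm)

end Model

/-- Proposition 2(c): if the Baron–Myerson-with-quantity-floor mechanism is not robustly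
optimal and `θ^m > θl`, every solution of (ROPT) coincides with `q^BM` on `(θl, θ^m)`. -/
theorem ROPT_no_adjustment_at_bottom (E : Env) (Mo : Model E)
    (hviol : ∃ θ ∈ E.Θ, E.Wl Mo.qstar θ < E.Gstar)
    (θm : ℝ) (hθm : Mo.IsThetaM θm) (hθmgt : E.θl < θm)
    (qOPT : ℝ → ℝ) (hOPT : Mo.SolvesROPT qOPT) :
    ∀ θ ∈ Ioo E.θl θm, qOPT θ = Mo.qBM θ := by
  obtain ⟨θv, hθv, hviol⟩ := hviol
  have hθmΘ : θm ∈ E.Θ := hθm.1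
  have hmin := hθm.2.1
  have hql : E.ql ≤ Mo.qBM θm := Mo.ql_le_qBM_of_Wl_lt hθmΘ ((hmin θv hθv).trans_lt hviol)
  have hPl : E.Pl (Mo.qBM θm) = θm := Mo.Pl_qBM_eq_of_isThetaM hθm hθmgt hql
  exact Mo.eqOn_qBM_of_ae_eq hOPT.1.1 hθmΘ (E.ql_pos.trans_le hql)
    (Mo.ae_eq_qBM_of_solvesROPT hOPT hθmΘ hmin hql hPl)
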